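/- arXiv:1507.01518 — 5 statements merged into one kernel-verified Lean document; each statement's English description precedes it below -/
import Mathlib

section
/- Let α > k > 0 be real numbers and let C > 0. Then there exists D with 0 < D ≤ 1, depending only on α, k and C, such that every sequence (v_i)_{i≥1} of nonnegative real numbers satisfying v_1 ≥ 1 and v_{i+1} ≥ v_i + C · v_i^{k/α} for every integer i ≥ 1 also satisfies v_i ≥ D · i^{α/(α−k)} for every integer i ≥ 1. -/
/-!
With `p = α / (α - k)` one has `k / α = (p - 1) / p`, so `w i = (m i) ^ p` satisfies
`w (i + 1) - w i = m ^ p ((i + 1) ^ p - i ^ p) ≤ m ^ p · p 2 ^ (p - 1) i ^ (p - 1)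
  = m p 2 ^ (p - 1) · (w i) ^ (k / α)`
by convexity of `x ↦ x ^ p`. For `m ≤ C / (p 2 ^ (p - 1))` and `m ≤ 1` the sequence `w` is
therefore a subsolution of the recursion `x ↦ x + C x ^ (k / α)` starting below `1 ≤ v 1`, and
since this map is monotone on `[0, ∞)`, induction gives `w i ≤ v i`. Take `D = m ^ p`.
-/

open Real Set

theorem MonotoneOn.seq_le_seq_from_one {β : Type*} [Preorder β] {f : β → β} {s : Set β}
    (hf : MonotoneOn f s) {w v : ℕ → β} (hws : ∀ i, w i ∈ s) (hvs : ∀ i, v i ∈ s)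
    (h₁ : w 1 ≤ v 1) (hw : ∀ i, 1 ≤ i → w (i + 1) ≤ f (w i))
    (hv : ∀ i, 1 ≤ i → f (v i) ≤ v (i + 1)) : ∀ i, 1 ≤ i → w i ≤ v i := by
  intro i hi
  induction i, hi using Nat.le_induction with
  | base => exact h₁
  | succ i hi ih => exact (hw i hi).trans <| (hf (hws i) (hvs i) ih).trans (hv i hi)

theorem rpow_sub_rpow_le_mul_rpow_sub_one {p x y : ℝ} (hp : 1 ≤ p) (hx : 0 ≤ x)
    (hxy : x ≤ y) :
    y ^ p - x ^ p ≤ p * y ^ (p - 1) * (y - x) := by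
  rcases hxy.eq_or_lt with rfl | hxy
  · simp
  have hy : 0 < y := hx.trans_lt hxy
  -- Bernoulli's inequality for `x / y = 1 + s` with `s = (x - y) / y ≥ -1`
  have hs : -1 ≤ (x - y) / y := by
    rw [le_div_iff₀ hy]; linarith
  have hbernoulli := one_add_mul_self_le_rpow_one_add hs hp
  have hxy' : 1 + (x - y) / y = x / y := by field_simp; ring
  rw [hxy', div_rpow hx hy.le, le_div_iff₀ (rpow_pos_of_pos hy p)] at hbernoulli
  have hyp : y ^ p = y ^ (p - 1) * y := by
    rw [← rpow_add_one hy.ne', sub_add_cancel]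
  rw [hyp] at hbernoulli ⊢
  have hexpand : (1 + p * ((x - y) / y)) * (y ^ (p - 1) * y)
      = y ^ (p - 1) * y - p * y ^ (p - 1) * (y - x) := by
    field_simp; ring
  linarith

theorem monotoneOn_add_const_mul_rpow {C q : ℝ} (hC : 0 ≤ C) (hq : 0 ≤ q) :
    MonotoneOn (fun x : ℝ ↦ x + C * x ^ q) (Ici 0) := by
  intro a ha b _ hab
  have : a ^ q ≤ b ^ q := rpow_le_rpow ha hab hq
  dsimp only
  gcongr

theorem rpow_mul_add_one_le {p m C x : ℝ} (hp : 1 < p) (hm : 0 < m)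
    (hmC : m * (p * 2 ^ (p - 1)) ≤ C) (hx : 1 ≤ x) :
    (m * (x + 1)) ^ p ≤ (m * x) ^ p + C * ((m * x) ^ p) ^ ((p - 1) / p) := by
  have hx0 : 0 ≤ x := zero_le_one.trans hx
  have hdiff : (x + 1) ^ p - x ^ p ≤ p * 2 ^ (p - 1) * x ^ (p - 1) := by
    calc (x + 1) ^ p - x ^ p ≤ p * (x + 1) ^ (p - 1) * (x + 1 - x) :=
          rpow_sub_rpow_le_mul_rpow_sub_one hp.le hx0 (by linarith)
      _ ≤ p * (2 * x) ^ (p - 1) := by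
          rw [add_sub_cancel_left, mul_one]
          gcongr
          linarith
      _ = p * 2 ^ (p - 1) * x ^ (p - 1) := by rw [mul_rpow zero_le_two hx0, mul_assoc]
  have hmp : m ^ p = m ^ (p - 1) * m := by rw [← rpow_add_one hm.ne', sub_add_cancel]
  have hpow : ((m * x) ^ p) ^ ((p - 1) / p) = m ^ (p - 1) * x ^ (p - 1) := by
    rw [← rpow_mul (by positivity), mul_div_cancel₀ _ (by positivity), mul_rpow hm.le hx0]
  rw [hpow, mul_rpow hm.le (by linarith), mul_rpow hm.le hx0, hmp]
  have hmp1 : 0 ≤ m ^ (p - 1) := by positivity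
  have hxp1 : 0 ≤ x ^ (p - 1) := by positivity
  calc m ^ (p - 1) * m * (x + 1) ^ p
      ≤ m ^ (p - 1) * m * (x ^ p + p * 2 ^ (p - 1) * x ^ (p - 1)) := by gcongr; linarith
    _ = m ^ (p - 1) * m * x ^ p + m * (p * 2 ^ (p - 1)) * (m ^ (p - 1) * x ^ (p - 1)) := by ring
    _ ≤ m ^ (p - 1) * m * x ^ p + C * (m ^ (p - 1) * x ^ (p - 1)) := by gcongr

/-- Discrete growth lemma: for real `α > k > 0` and `C > 0` there is `0 < D ≤ 1`
(depending only on `α, k, C`) such that every sequence `(v i)` of nonnegative reals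
with `v 1 ≥ 1` and `v (i+1) ≥ v i + C · (v i)^(k/α)` for all `i ≥ 1` satisfies
`v i ≥ D · i^(α/(α-k))` for all `i ≥ 1`. -/
theorem discrete_growth_lemma (α k C : ℝ) (hk : 0 < k) (hα : k < α) (hC : 0 < C) :
    ∃ D : ℝ, 0 < D ∧ D ≤ 1 ∧ ∀ v : ℕ → ℝ, (∀ i, 0 ≤ v i) → 1 ≤ v 1 →
      (∀ i : ℕ, 1 ≤ i → v i + C * (v i) ^ (k / α) ≤ v (i + 1)) →
      ∀ i : ℕ, 1 ≤ i → D * (i : ℝ) ^ (α / (α - k)) ≤ v i := by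
  set p := α / (α - k)
  have hαk : 0 < α - k := sub_pos.mpr hα
  have hp : 1 < p := by rw [one_lt_div hαk]; linarith
  have hq : k / α = (p - 1) / p := by
    have : α ≠ 0 := by linarith
    simp only [p]; field_simp; ring
  set m := min 1 (C / (p * 2 ^ (p - 1)))
  have hm : 0 < m := lt_min one_pos (by positivity)
  have hmC : m * (p * 2 ^ (p - 1)) ≤ C := (le_div_iff₀ (by positivity)).mp (min_le_right _ _)
  refine ⟨m ^ p, by positivity, rpow_le_one hm.le (min_le_left _ _) (by positivity), ?_⟩
  intro v hv₀ hv₁ hv i hi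
  have hstart : (m * ((1 : ℕ) : ℝ)) ^ p ≤ v 1 := by
    rw [Nat.cast_one, mul_one]
    exact (rpow_le_one hm.le (min_le_left _ _) (by positivity)).trans hv₁
  have hbarrier (i : ℕ) (hi : 1 ≤ i) :
      (m * ((i + 1 : ℕ) : ℝ)) ^ p ≤ (m * i) ^ p + C * ((m * i) ^ p) ^ (k / α) := by
    rw [hq, Nat.cast_succ]
    exact rpow_mul_add_one_le hp hm hmC (Nat.one_le_cast.mpr hi)
  have hf := monotoneOn_add_const_mul_rpow hC.le (div_pos hk (hk.trans hα)).le
  have hcmp := hf.seq_le_seq_from_one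
    (fun i ↦ rpow_nonneg (mul_nonneg hm.le i.cast_nonneg) p) hv₀ hstart hbarrier hv i hi
  rwa [mul_rpow hm.le (Nat.cast_nonneg i)] at hcmp
end

section
/- Let k ≥ 1 be an integer and let λ be a real number with 0 < λ ≤ 1. Let S be a nonempty finite set, and suppose that for each y ∈ S and each positive integer r a subset C(y,r) ⊆ S is given such that: (i) y ∈ C(y,1); (ii) C(y,r) ⊆ C(y,r') whenever r ≤ r'; and (iii) for all y, y' ∈ S and positive integers r' ≤ r, if C(y,2r) ∩ C(y',2r') ≠ ∅ then y' ∈ C(y,6r). For y ∈ S let r₀(y) be the largest positive integer r with |C(y,r)| ≥ λ·r^k (this exists since |C(y,1)| ≥ 1 ≥ λ·1^k and |C(y,r)| ≤ |S| for all r). Then there exist finitely many elements y₁, …, y_N ∈ S such that, writing r_i = r₀(y_i): (a) the sets C(y_i, 2r_i), i = 1, …, N, are pairwise disjoint; (b) S = C(y₁,6r₁) ∪ … ∪ C(y_N,6r_N); and (c) |S|/6^k ≤ Σ_{i=1}^N |C(y_i, r_i)| ≤ |S|. -/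
/-!
Pick greedily a remaining point `y` of largest radius `r₀ y` and discard its ball `C y (6 r₀ y)`.
If `a` is picked before `b`, then `r₀ b ≤ r₀ a` and `b ∉ C a (6 r₀ a)`, so by (iii) the balls
`C a (2 r₀ a)` and `C b (2 r₀ b)` are disjoint; this gives (a) and, since they lie in `S`, the upper
bound in (c). The discarded balls cover `S`, and maximality of `r₀ y` gives
`|C y (6 r₀ y)| < λ (6 r₀ y)^k ≤ 6^k |C y (r₀ y)|`, whence the lower bound.
-/

open Finset Function

section

variable {γ : Type*}

theorem card_le_pow_mul_card {s t : Finset γ} {lam : ℝ} {r m k : ℕ}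
    (hs : lam * (r : ℝ) ^ k ≤ #s) (ht : (#t : ℝ) < lam * ((m * r : ℕ) : ℝ) ^ k) :
    (#t : ℝ) ≤ m ^ k * #s :=
  calc (#t : ℝ) ≤ lam * ((m * r : ℕ) : ℝ) ^ k := ht.le
    _ = m ^ k * (lam * (r : ℝ) ^ k) := by push_cast; ring
    _ ≤ m ^ k * #s := by gcongr

variable [DecidableEq γ]

theorem exists_greedy_list {β : Type*} [LinearOrder β] (B : γ → Finset γ) (f : γ → β)
    (T : Finset γ) (hmem : ∀ y ∈ T, y ∈ B y) :
    ∃ L : List γ, L.Pairwise (fun a b => f b ≤ f a ∧ b ∉ B a) ∧ (∀ a ∈ L, a ∈ T) ∧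
      ∀ s ∈ T, ∃ a ∈ L, s ∈ B a := by
  induction T using Finset.strongInduction with
  | H T ih =>
  rcases T.eq_empty_or_nonempty with rfl | hT
  · exact ⟨[], .nil, by simp, by simp⟩
  obtain ⟨y, hyT, hymax⟩ := T.exists_max_image f hT
  have hssub : T \ B y ⊂ T :=
    (ssubset_iff_of_subset sdiff_subset).2 ⟨y, hyT, fun h => (mem_sdiff.1 h).2 (hmem y hyT)⟩
  obtain ⟨L, hL, hLT, hcover⟩ := ih _ hssub fun z hz => hmem z (mem_sdiff.1 hz).1
  refine ⟨y :: L, List.pairwise_cons.2 ⟨fun b hb => ?_, hL⟩, ?_, fun s hs => ?_⟩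
  · obtain ⟨hbT, hby⟩ := mem_sdiff.1 (hLT b hb)
    exact ⟨hymax b hbT, hby⟩
  · simpa [hyT] using fun a ha => (mem_sdiff.1 (hLT a ha)).1
  · by_cases hsy : s ∈ B y
    · exact ⟨y, List.mem_cons_self, hsy⟩
    · obtain ⟨a, ha, hsa⟩ := hcover s (mem_sdiff.2 ⟨hs, hsy⟩)
      exact ⟨a, List.mem_cons_of_mem _ ha, hsa⟩

theorem exists_greedy_family {β : Type*} [LinearOrder β] (B : γ → Finset γ) (f : γ → β)
    (T : Finset γ) (hmem : ∀ y ∈ T, y ∈ B y) :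
    ∃ (N : ℕ) (y : Fin N → γ), (∀ i, y i ∈ T) ∧
      (∀ i j, i < j → f (y j) ≤ f (y i) ∧ y j ∉ B (y i)) ∧ ∀ s ∈ T, ∃ i, s ∈ B (y i) := by
  obtain ⟨L, hL, hLT, hcover⟩ := exists_greedy_list B f T hmem
  refine ⟨L.length, L.get, fun i => hLT _ (L.get_mem i), fun i j => List.pairwise_iff_get.1 hL i j,
    fun s hs => ?_⟩
  obtain ⟨a, ha, hsa⟩ := hcover s hs
  obtain ⟨i, rfl⟩ := List.mem_iff_get.1 ha
  exact ⟨i, hsa⟩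

theorem sum_card_le_card_of_pairwise_disjoint {ι : Type*} [Fintype ι] {t : ι → Finset γ}
    {S : Finset γ} (hdisj : Pairwise (Disjoint on t)) (hS : ∀ i, t i ⊆ S) :
    ∑ i, #(t i) ≤ #S := by
  rw [← card_biUnion (hdisj.set_pairwise _)]
  exact card_le_card (biUnion_subset.2 fun i _ => hS i)

theorem card_le_sum_card_of_cover {ι : Type*} [Fintype ι] {t : ι → Finset γ}
    {S : Finset γ} (hS : ∀ s ∈ S, ∃ i, s ∈ t i) : #S ≤ ∑ i, #(t i) :=
  (card_le_card fun s hs => mem_biUnion.2 <| (hS s hs).imp fun i h => ⟨mem_univ i, h⟩).trans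
    card_biUnion_le

end

theorem greedy_round_selection_general {γ : Type*} [DecidableEq γ] (k : ℕ)
    (lam : ℝ)
    (S : Finset γ)
    (C : γ → ℕ → Finset γ)
    (hsub : ∀ y ∈ S, ∀ r : ℕ, 1 ≤ r → C y r ⊆ S)
    (hself : ∀ y ∈ S, y ∈ C y 1)
    (hmono : ∀ y ∈ S, ∀ r r' : ℕ, 1 ≤ r → r ≤ r' → C y r ⊆ C y r')
    (htri : ∀ y ∈ S, ∀ y' ∈ S, ∀ r r' : ℕ, 1 ≤ r' → r' ≤ r →
      (C y (2 * r) ∩ C y' (2 * r')).Nonempty → y' ∈ C y (6 * r))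
    (r₀ : γ → ℕ)
    (hr₀pos : ∀ y ∈ S, 1 ≤ r₀ y)
    (hr₀big : ∀ y ∈ S, lam * (r₀ y : ℝ) ^ k ≤ ((C y (r₀ y)).card : ℝ))
    (hr₀max : ∀ y ∈ S, ∀ r : ℕ, r₀ y < r → ((C y r).card : ℝ) < lam * (r : ℝ) ^ k) :
    ∃ (N : ℕ) (y : Fin N → γ), (∀ i, y i ∈ S) ∧
      (∀ i j, i ≠ j →
        Disjoint (C (y i) (2 * r₀ (y i))) (C (y j) (2 * r₀ (y j)))) ∧
      (∀ s ∈ S, ∃ i, s ∈ C (y i) (6 * r₀ (y i))) ∧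
      ((S.card : ℝ) / 6 ^ k ≤ ∑ i, ((C (y i) (r₀ (y i))).card : ℝ)) ∧
      (∑ i, ((C (y i) (r₀ (y i))).card : ℝ)) ≤ (S.card : ℝ) := by
  obtain ⟨N, y, hyS, hgreedy, hcover⟩ := exists_greedy_family (fun a => C a (6 * r₀ a)) r₀ S
    fun a ha => hmono a ha 1 _ le_rfl (by have := hr₀pos a ha; omega) (hself a ha)
  have hr₀y : ∀ i, 1 ≤ r₀ (y i) := fun i => hr₀pos _ (hyS i)
  have hdisj : Pairwise (Disjoint on fun i => C (y i) (2 * r₀ (y i))) :=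
    (pairwise_disjoint_on _).2 fun i j hij => by
      obtain ⟨hle, hnot⟩ := hgreedy i j hij
      exact disjoint_iff_inter_eq_empty.2 <| not_nonempty_iff_eq_empty.1 fun h =>
        hnot <| htri _ (hyS i) _ (hyS j) _ _ (hr₀y j) hle h
  have hsix : ∀ i, (#(C (y i) (6 * r₀ (y i))) : ℝ) ≤ 6 ^ k * #(C (y i) (r₀ (y i))) := fun i =>
    card_le_pow_mul_card (hr₀big _ (hyS i))
      (hr₀max _ (hyS i) _ (by have := hr₀y i; omega))
  refine ⟨N, y, hyS, fun i j => @hdisj i j, hcover, ?_, ?_⟩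
  · rw [div_le_iff₀ (by positivity), mul_comm, mul_sum]
    calc (#S : ℝ) ≤ ∑ i, (#(C (y i) (6 * r₀ (y i))) : ℝ) := by
          exact_mod_cast card_le_sum_card_of_cover hcover
      _ ≤ ∑ i, 6 ^ k * (#(C (y i) (r₀ (y i))) : ℝ) := sum_le_sum fun i _ => hsix i
  · have hle : ∀ i, C (y i) (r₀ (y i)) ⊆ C (y i) (2 * r₀ (y i)) := fun i =>
      hmono _ (hyS i) _ _ (hr₀y i) (by omega)
    exact_mod_cast (sum_le_sum fun i _ => card_le_card (hle i)).trans
      (sum_card_le_card_of_pairwise_disjoint hdisj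
        fun i => hsub _ (hyS i) _ (by have := hr₀y i; omega))

/-- Abstract Step 1 of Proposition 4.2 (partition into round hypersurfaces):
a greedy Vitali-type covering selection.  `S` is a nonempty finite set, `C y r`
plays the role of the ball of radius `r` around `y`, and `r₀ y` is the largest
positive integer `r` with `|C y r| ≥ λ·r^k`.  One can select `y₁, …, y_N ∈ S`
such that the sets `C (y i) (2·r₀ (y i))` are pairwise disjoint, the sets
`C (y i) (6·r₀ (y i))` cover `S`, and the selected pieces `C (y i) (r₀ (y i))`
capture between a `1/6^k`-fraction and all of `|S|`. -/
theorem greedy_round_selection {γ : Type*} [DecidableEq γ] (k : ℕ) (hk : 1 ≤ k)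
    (lam : ℝ) (hlam0 : 0 < lam) (hlam1 : lam ≤ 1)
    (S : Finset γ) (hS : S.Nonempty)
    (C : γ → ℕ → Finset γ)
    (hsub : ∀ y ∈ S, ∀ r : ℕ, 1 ≤ r → C y r ⊆ S)
    (hself : ∀ y ∈ S, y ∈ C y 1)
    (hmono : ∀ y ∈ S, ∀ r r' : ℕ, 1 ≤ r → r ≤ r' → C y r ⊆ C y r')
    (htri : ∀ y ∈ S, ∀ y' ∈ S, ∀ r r' : ℕ, 1 ≤ r' → r' ≤ r →
      (C y (2 * r) ∩ C y' (2 * r')).Nonempty → y' ∈ C y (6 * r))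
    (r₀ : γ → ℕ)
    (hr₀pos : ∀ y ∈ S, 1 ≤ r₀ y)
    (hr₀big : ∀ y ∈ S, lam * (r₀ y : ℝ) ^ k ≤ ((C y (r₀ y)).card : ℝ))
    (hr₀max : ∀ y ∈ S, ∀ r : ℕ, r₀ y < r → ((C y r).card : ℝ) < lam * (r : ℝ) ^ k) :
    ∃ (N : ℕ) (y : Fin N → γ), (∀ i, y i ∈ S) ∧
      (∀ i j, i ≠ j →
        Disjoint (C (y i) (2 * r₀ (y i))) (C (y j) (2 * r₀ (y j)))) ∧
      (∀ s ∈ S, ∃ i, s ∈ C (y i) (6 * r₀ (y i))) ∧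
      ((S.card : ℝ) / 6 ^ k ≤ ∑ i, ((C (y i) (r₀ (y i))).card : ℝ)) ∧
      (∑ i, ((C (y i) (r₀ (y i))).card : ℝ)) ≤ (S.card : ℝ) :=
  greedy_round_selection_general k lam S C hsub hself hmono htri r₀ hr₀pos hr₀big hr₀max
end

section
/- Let k ≥ 1 be an integer. Let S be a finite set, and suppose that for each y ∈ S and each positive integer r a subset C(y,r) ⊆ S is given such that: (i) y ∈ C(y,1); (ii) C(y,r) ⊆ C(y,r') whenever r ≤ r'; and (iii) for all y, y' ∈ S and positive integers r' ≤ r, if C(y,2r) ∩ C(y',2r') ≠ ∅ then y' ∈ C(y,6r). Let T ⊆ S be a nonempty subset and let r: T → {1, 2, 3, …} be a function such that |C(y, 6·r(y))| ≤ 12^k · |C(y, r(y))| for every y ∈ T. Then there exist finitely many elements y₁, …, y_q ∈ T such that, writing r_i = r(y_i): (a) the sets C(y_i, 2r_i), i = 1, …, q, are pairwise disjoint; (b) T ⊆ C(y₁,6r₁) ∪ … ∪ C(y_q,6r_q); and (c) |T|/12^k ≤ Σ_{i=1}^q |C(y_i, r_i)| ≤ |S|. -/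
/-!
Vitali-type greedy selection: repeatedly pick a remaining point of largest radius and discard
everything its `6r`-ball covers. Because radii decrease along the selection, the separation
property (iii) makes the `2r`-balls of the selected points pairwise disjoint, while the discarded
points are covered by the `6r`-balls. Covering plus the doubling bound gives the lower estimate,
disjointness of the (smaller) `r`-balls inside `S` gives the upper one.
-/

open Finset

theorem Finset.sum_equivFin_symm {α β : Type*} [AddCommMonoid β] (s : Finset α) (f : α → β) :
    ∑ i, f (s.equivFin.symm i) = ∑ a ∈ s, f a :=
  (Equiv.sum_comp s.equivFin.symm fun a => f a).trans (sum_coe_sort s f)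

theorem Finset.exists_disjoint_subfamily_covering_enlargement {γ α : Type*} [DecidableEq γ]
    [LinearOrder α] (small large : γ → Finset γ) (ρ : γ → α) (T : Finset γ)
    (hself : ∀ y ∈ T, y ∈ large y)
    (hsep : ∀ y ∈ T, ∀ y' ∈ T, ρ y' ≤ ρ y → ¬Disjoint (small y) (small y') → y' ∈ large y) :
    ∃ F ⊆ T, (F : Set γ).PairwiseDisjoint small ∧ ∀ t ∈ T, ∃ y ∈ F, t ∈ large y := by
  induction T using Finset.strongInduction with
  | H T ih =>
  obtain rfl | hne := T.eq_empty_or_nonempty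
  · exact ⟨∅, empty_subset _, by simp, by simp⟩
  obtain ⟨y₀, hy₀, hmax⟩ := T.exists_max_image ρ hne
  set R := T.filter (· ∉ large y₀)
  have hRT : R ⊆ T := filter_subset _ _
  have hy₀R : y₀ ∉ R := by simp [R, hself y₀ hy₀]
  obtain ⟨F, hFR, hFdisj, hFcov⟩ := ih R (filter_ssubset.2 ⟨y₀, hy₀, by simp [hself y₀ hy₀]⟩)
    (fun y hy => hself y (hRT hy)) (fun y hy y' hy' => hsep y (hRT hy) y' (hRT hy'))
  refine ⟨insert y₀ F, insert_subset hy₀ (hFR.trans hRT), ?_, ?_⟩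
  · rw [coe_insert, Set.pairwiseDisjoint_insert_of_notMem (fun h => hy₀R (hFR h))]
    refine ⟨hFdisj, fun y hy => ?_⟩
    by_contra hnd
    exact (mem_filter.1 (hFR hy)).2 (hsep y₀ hy₀ y (hRT (hFR hy)) (hmax y (hRT (hFR hy))) hnd)
  · intro t ht
    by_cases htl : t ∈ large y₀
    · exact ⟨y₀, mem_insert_self _ _, htl⟩
    · obtain ⟨y, hy, hty⟩ := hFcov t (mem_filter.2 ⟨ht, htl⟩)
      exact ⟨y, mem_insert_of_mem hy, hty⟩

theorem Finset.sum_card_le_card_of_pairwiseDisjoint {ι γ : Type*} [DecidableEq γ] {F : Finset ι}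
    {f : ι → Finset γ} {S : Finset γ} (hF : (F : Set ι).PairwiseDisjoint f)
    (hS : ∀ i ∈ F, f i ⊆ S) : ∑ i ∈ F, #(f i) ≤ #S :=
  card_biUnion hF ▸ card_le_card (biUnion_subset.2 hS)

theorem Finset.card_le_mul_sum_card_of_covering {ι γ : Type*} [DecidableEq γ] {F : Finset ι}
    {small large : ι → Finset γ} {T : Finset γ} {K : ℝ}
    (hcov : ∀ t ∈ T, ∃ i ∈ F, t ∈ large i) (hdbl : ∀ i ∈ F, (#(large i) : ℝ) ≤ K * #(small i)) :
    (#T : ℝ) ≤ K * ∑ i ∈ F, (#(small i) : ℝ) := by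
  have hT : T ⊆ F.biUnion large := fun t ht => mem_biUnion.2 (hcov t ht)
  calc (#T : ℝ) ≤ ∑ i ∈ F, (#(large i) : ℝ) := by
        exact_mod_cast (card_le_card hT).trans card_biUnion_le
    _ ≤ ∑ i ∈ F, K * #(small i) := sum_le_sum hdbl
    _ = K * ∑ i ∈ F, (#(small i) : ℝ) := (mul_sum _ _ _).symm

theorem greedy_folded_selection_general {γ : Type*} [DecidableEq γ] (k : ℕ)
    (S : Finset γ)
    (C : γ → ℕ → Finset γ)
    (hsub : ∀ y ∈ S, ∀ r : ℕ, 1 ≤ r → C y r ⊆ S)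
    (hself : ∀ y ∈ S, y ∈ C y 1)
    (hmono : ∀ y ∈ S, ∀ r r' : ℕ, 1 ≤ r → r ≤ r' → C y r ⊆ C y r')
    (htri : ∀ y ∈ S, ∀ y' ∈ S, ∀ r r' : ℕ, 1 ≤ r' → r' ≤ r →
      (C y (2 * r) ∩ C y' (2 * r')).Nonempty → y' ∈ C y (6 * r))
    (T : Finset γ) (hT : T ⊆ S)
    (r : γ → ℕ) (hr1 : ∀ y ∈ T, 1 ≤ r y)
    (hdbl : ∀ y ∈ T, ((C y (6 * r y)).card : ℝ) ≤ 12 ^ k * ((C y (r y)).card : ℝ)) :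
    ∃ (q : ℕ) (y : Fin q → γ), (∀ i, y i ∈ T) ∧
      (∀ i j, i ≠ j →
        Disjoint (C (y i) (2 * r (y i))) (C (y j) (2 * r (y j)))) ∧
      (∀ t ∈ T, ∃ i, t ∈ C (y i) (6 * r (y i))) ∧
      ((T.card : ℝ) / 12 ^ k ≤ ∑ i, ((C (y i) (r (y i))).card : ℝ)) ∧
      (∑ i, ((C (y i) (r (y i))).card : ℝ)) ≤ (S.card : ℝ) := by
  obtain ⟨F, hFT, hdisj, hcov⟩ := exists_disjoint_subfamily_covering_enlargement
    (fun y => C y (2 * r y)) (fun y => C y (6 * r y)) r T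
    (fun y hy => hmono y (hT hy) 1 _ le_rfl (by linarith [hr1 y hy]) (hself y (hT hy)))
    (fun y hy y' hy' hle hnd => htri y (hT hy) y' (hT hy') _ _ (hr1 y' hy') hle
      (not_disjoint_iff_nonempty_inter.1 hnd))
  let e := F.equivFin.symm
  have hsum : ∑ i, ((C (e i) (r (e i))).card : ℝ) = ∑ y ∈ F, ((C y (r y)).card : ℝ) :=
    F.sum_equivFin_symm fun y => ((C y (r y)).card : ℝ)
  refine ⟨#F, fun i => e i, fun i => hFT (e i).2,
    fun i j hij => hdisj (e i).2 (e j).2 (Subtype.coe_injective.ne (e.injective.ne hij)),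
    fun t ht => ?_, ?_, ?_⟩
  · obtain ⟨y, hy, hty⟩ := hcov t ht
    exact ⟨F.equivFin ⟨y, hy⟩, by simpa [e] using hty⟩
  · rw [hsum, div_le_iff₀' (by positivity)]
    exact card_le_mul_sum_card_of_covering hcov fun y hy => hdbl y (hFT hy)
  · rw [hsum]
    exact_mod_cast sum_card_le_card_of_pairwiseDisjoint
      (hdisj.mono_on fun y hy => hmono y (hT (hFT hy)) _ _ (hr1 y (hFT hy)) (by omega))
      fun y hy => hsub y (hT (hFT hy)) _ (hr1 y (hFT hy))

/-- Abstract greedy selection from the proof of Proposition 4.13 (removal of folded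
parts): given a finite set `S` with balls `C y r`, a nonempty subset `T ⊆ S` and
radii `r y ≥ 1` on `T` satisfying the doubling bound `|C y (6·r y)| ≤ 12^k·|C y (r y)|`,
one can select `y₁, …, y_q ∈ T` with `C (y i) (2·r (y i))` pairwise disjoint,
`C (y i) (6·r (y i))` covering `T`, and
`|T|/12^k ≤ Σ |C (y i) (r (y i))| ≤ |S|`. -/
theorem greedy_folded_selection {γ : Type*} [DecidableEq γ] (k : ℕ) (hk : 1 ≤ k)
    (S : Finset γ)
    (C : γ → ℕ → Finset γ)
    (hsub : ∀ y ∈ S, ∀ r : ℕ, 1 ≤ r → C y r ⊆ S)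
    (hself : ∀ y ∈ S, y ∈ C y 1)
    (hmono : ∀ y ∈ S, ∀ r r' : ℕ, 1 ≤ r → r ≤ r' → C y r ⊆ C y r')
    (htri : ∀ y ∈ S, ∀ y' ∈ S, ∀ r r' : ℕ, 1 ≤ r' → r' ≤ r →
      (C y (2 * r) ∩ C y' (2 * r')).Nonempty → y' ∈ C y (6 * r))
    (T : Finset γ) (hT : T ⊆ S) (hTne : T.Nonempty)
    (r : γ → ℕ) (hr1 : ∀ y ∈ T, 1 ≤ r y)
    (hdbl : ∀ y ∈ T, ((C y (6 * r y)).card : ℝ) ≤ 12 ^ k * ((C y (r y)).card : ℝ)) :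
    ∃ (q : ℕ) (y : Fin q → γ), (∀ i, y i ∈ T) ∧
      (∀ i j, i ≠ j →
        Disjoint (C (y i) (2 * r (y i))) (C (y j) (2 * r (y j)))) ∧
      (∀ t ∈ T, ∃ i, t ∈ C (y i) (6 * r (y i))) ∧
      ((T.card : ℝ) / 12 ^ k ≤ ∑ i, ((C (y i) (r (y i))).card : ℝ)) ∧
      (∑ i, ((C (y i) (r (y i))).card : ℝ)) ≤ (S.card : ℝ) :=
  greedy_folded_selection_general k S C hsub hself hmono htri T hT r hr1 hdbl
end

section
/- Let k ≥ 1 be an integer, let ε ∈ (0,1), and let ρ ≥ 1 be a real number. Let V: [1,ρ] → [0,∞) be a nondecreasing function with V(1) > ε, and assume the set F = { r ∈ [1,ρ] : V(r) < ε·r^k/(2·12^k) } is nonempty. Set R* = inf F and r* = sup { r ∈ [1,R*] : V(r) > ε·r^k } (this set is nonempty since it contains 1). Then: (a) V(r*) ≥ ε·(r*)^k; (b) 12·r* < R*; (c) V(12·r*) ≤ 12^k · V(r*); and (d) V(r) ≤ ε·r^k for every r with r* < r ≤ R*. In particular, setting r = r* + 1 one has r ≤ R*, V(r) ≤ ε·r^k,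 and V(6r) ≤ V(12·r*) ≤ 12^k·V(r). -/
/-- Abstract Lemma 4.14 (with the observation `r* < R*/12`): for a nondecreasing
volume function `V` on `[1, ρ]` with `V 1 > ε`, whose `ε`-folded set
`F = {r ∈ [1,ρ] : V r < ε·r^k/(2·12^k)}` is nonempty, the radii `R* = inf F` and
`r* = sup {r ∈ [1,R*] : V r > ε·r^k}` satisfy: (a) `V r* ≥ ε·(r*)^k`,
(b) `12·r* < R*`, (c) `V (12 r*) ≤ 12^k·V r*`, (d) `V r ≤ ε·r^k` for `r* < r ≤ R*`;
in particular `r = r* + 1` satisfies `r ≤ R*`, `V r ≤ ε·r^k` and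
`V (6r) ≤ V (12 r*) ≤ 12^k·V r`. -/
theorem folded_radius_lemma (k : ℕ) (hk : 1 ≤ k) (ε ρ : ℝ)
    (hε : ε ∈ Set.Ioo (0 : ℝ) 1) (hρ : 1 ≤ ρ)
    (V : ℝ → ℝ)
    (hV0 : ∀ r ∈ Set.Icc (1 : ℝ) ρ, 0 ≤ V r)
    (hVmono : ∀ r ∈ Set.Icc (1 : ℝ) ρ, ∀ r' ∈ Set.Icc (1 : ℝ) ρ, r ≤ r' → V r ≤ V r')
    (hV1 : ε < V 1)
    (F : Set ℝ) (hF : F = {r ∈ Set.Icc (1 : ℝ) ρ | V r < ε * r ^ k / (2 * 12 ^ k)})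
    (hFne : F.Nonempty)
    (Rstar rstar : ℝ) (hR : Rstar = sInf F)
    (hr : rstar = sSup {r ∈ Set.Icc (1 : ℝ) Rstar | ε * r ^ k < V r}) :
    ε * rstar ^ k ≤ V rstar ∧
    12 * rstar < Rstar ∧
    V (12 * rstar) ≤ 12 ^ k * V rstar ∧
    (∀ r : ℝ, rstar < r → r ≤ Rstar → V r ≤ ε * r ^ k) ∧
    (rstar + 1 ≤ Rstar ∧ V (rstar + 1) ≤ ε * (rstar + 1) ^ k ∧
      V (6 * (rstar + 1)) ≤ V (12 * rstar) ∧
      V (12 * rstar) ≤ 12 ^ k * V (rstar + 1)) := by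
  obtain ⟨hε0, hε1⟩ := hε
  have hk0 : k ≠ 0 := by omega
  set S : Set ℝ := {r ∈ Set.Icc (1 : ℝ) Rstar | ε * r ^ k < V r} with hS
  -- basic facts about F
  have hFsub : F ⊆ Set.Icc (1 : ℝ) ρ := by rw [hF]; exact fun x hx => hx.1
  have hFbdd : BddBelow F := ⟨1, fun x hx => (hFsub hx).1⟩
  have hR1 : 1 ≤ Rstar := by
    rw [hR]; exact le_csInf hFne fun x hx => (hFsub hx).1
  have hRρ : Rstar ≤ ρ := by
    obtain ⟨s, hs⟩ := hFne
    rw [hR]; exact le_trans (csInf_le hFbdd hs) (hFsub hs).2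
  -- basic facts about S
  have h1S : (1 : ℝ) ∈ S := by
    refine ⟨⟨le_refl 1, hR1⟩, ?_⟩
    simpa using hV1
  have hSne : S.Nonempty := ⟨1, h1S⟩
  have hSbdd : BddAbove S := ⟨Rstar, fun x hx => hx.1.2⟩
  have hr1 : 1 ≤ rstar := by rw [hr]; exact le_csSup hSbdd h1S
  have hrR : rstar ≤ Rstar := by rw [hr]; exact csSup_le hSne fun x hx => hx.1.2
  have hrρ : rstar ≤ ρ := le_trans hrR hRρ
  have hrIcc : rstar ∈ Set.Icc (1:ℝ) ρ := ⟨hr1, hrρ⟩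
  have hr0 : (0:ℝ) < rstar := lt_of_lt_of_le one_pos hr1
  -- (a) : ε * rstar ^ k ≤ V rstar
  have hVr_pos : ε < V rstar := by
    exact lt_of_lt_of_le hV1 (hVmono 1 ⟨le_refl 1, hρ⟩ rstar hrIcc hr1)
  have ha : ε * rstar ^ k ≤ V rstar := by
    set B : ℝ := V rstar / ε with hB
    have hB0 : 0 ≤ B := le_of_lt (div_pos (lt_trans hε0 hVr_pos) hε0)
    have key : rstar ≤ B ^ ((k : ℝ)⁻¹) := by
      rw [hr]
      refine csSup_le hSne fun x hx => ?_
      obtain ⟨⟨hx1, hxR⟩, hxV⟩ := hx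
      have hx0 : (0:ℝ) ≤ x := le_trans zero_le_one hx1
      have hxρ : x ∈ Set.Icc (1:ℝ) ρ := ⟨hx1, le_trans hxR hRρ⟩
      have hVx : V x ≤ V rstar := by
        rcases le_or_gt x rstar with h | h
        · exact hVmono x hxρ rstar hrIcc h
        · exact absurd (hr ▸ le_csSup hSbdd ⟨⟨hx1, hxR⟩, hxV⟩) (not_le.mpr h)
      have hxk : x ^ k ≤ B := by
        rw [hB, le_div_iff₀ hε0]
        calc x ^ k * ε = ε * x ^ k := mul_comm _ _
          _ ≤ V x := le_of_lt hxV
          _ ≤ V rstar := hVx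
      calc x = (x ^ k) ^ ((k:ℝ)⁻¹) := (Real.pow_rpow_inv_natCast hx0 hk0).symm
        _ ≤ B ^ ((k:ℝ)⁻¹) := Real.rpow_le_rpow (pow_nonneg hx0 k) hxk (by positivity)
    have : rstar ^ k ≤ B := by
      calc rstar ^ k ≤ (B ^ ((k:ℝ)⁻¹)) ^ k :=
            pow_le_pow_left₀ (le_of_lt hr0) key k
        _ = B := Real.rpow_inv_natCast_pow hB0 hk0
    rw [hB, le_div_iff₀ hε0] at this
    linarith [this]
  -- (b) : 12 * rstar < Rstar
  have h12k : (0:ℝ) < 12 ^ k := by positivity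
  have hb : 12 * rstar < Rstar := by
    set t : ℝ := (2:ℝ) ^ ((k:ℝ)⁻¹) * (12 * rstar) with ht
    have h2pow : ((2:ℝ) ^ ((k:ℝ)⁻¹)) ^ k = 2 := Real.rpow_inv_natCast_pow (by norm_num) hk0
    have htk : t ^ k = 2 * (12 * rstar) ^ k := by
      rw [ht, mul_pow, h2pow]
    have hkinv : (0:ℝ) < (k:ℝ)⁻¹ :=
      inv_pos.mpr (by exact_mod_cast Nat.pos_of_ne_zero hk0)
    have hone : (1:ℝ) < (2:ℝ) ^ ((k:ℝ)⁻¹) :=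
      (Real.one_lt_rpow_iff_of_pos (by norm_num)).mpr (Or.inl ⟨by norm_num, hkinv⟩)
    have h12r0 : (0:ℝ) < 12 * rstar := by linarith
    have hlt : 12 * rstar < t := by
      rw [ht]
      nlinarith
    refine lt_of_lt_of_le hlt ?_
    rw [hR]
    refine le_csInf hFne fun s hs => ?_
    rw [hF] at hs
    obtain ⟨⟨hs1, hsρ⟩, hsV⟩ := hs
    have hs0 : (0:ℝ) ≤ s := le_trans zero_le_one hs1
    have hrs : rstar ≤ s := by
      by_contra h
      push_neg at h
      have : V s ≥ ε := le_of_lt (lt_of_lt_of_le hV1 (hVmono 1 ⟨le_refl 1, hρ⟩ s ⟨hs1, hsρ⟩ hs1))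
      have hsk : (1:ℝ) ≤ s ^ k := one_le_pow₀ hs1
      have hRs : Rstar ≤ s := hR ▸ csInf_le hFbdd (by rw [hF]; exact ⟨⟨hs1, hsρ⟩, hsV⟩)
      linarith [le_trans hrR hRs]
    have hVrs : V rstar ≤ V s := hVmono rstar hrIcc s ⟨hs1, hsρ⟩ hrs
    -- ε rstar^k ≤ V rstar ≤ V s < ε s^k / (2·12^k)
    have hkey : 2 * (12 * rstar) ^ k ≤ s ^ k := by
      have h1 : ε * rstar ^ k < ε * s ^ k / (2 * 12 ^ k) := lt_of_le_of_lt (le_trans ha hVrs) hsV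
      rw [lt_div_iff₀ (by positivity)] at h1
      have h2 : rstar ^ k * (2 * 12 ^ k) ≤ s ^ k := by
        rw [mul_assoc] at h1
        exact le_of_lt (lt_of_mul_lt_mul_left h1 hε0.le)
      calc 2 * (12 * rstar) ^ k = rstar ^ k * (2 * 12 ^ k) := by rw [mul_pow]; ring
        _ ≤ s ^ k := h2
    have ht0 : (0:ℝ) ≤ t := by positivity
    have : t ^ k ≤ s ^ k := by rw [htk]; exact hkey
    exact le_of_pow_le_pow_left₀ hk0 hs0 this
  -- (d) : ∀ r, rstar < r → r ≤ Rstar → V r ≤ ε * r ^ k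
  have hd : ∀ r : ℝ, rstar < r → r ≤ Rstar → V r ≤ ε * r ^ k := by
    intro r hrr hrRs
    by_contra h
    push_neg at h
    have : r ∈ S := ⟨⟨le_trans hr1 (le_of_lt hrr), hrRs⟩, h⟩
    have := hr ▸ le_csSup hSbdd this
    linarith
  -- (c) : V (12 * rstar) ≤ 12 ^ k * V rstar
  have hc : V (12 * rstar) ≤ 12 ^ k * V rstar := by
    have h1 : V (12 * rstar) ≤ ε * (12 * rstar) ^ k :=
      hd (12 * rstar) (by linarith) (le_of_lt hb)
    calc V (12 * rstar) ≤ ε * (12 * rstar) ^ k := h1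
      _ = 12 ^ k * (ε * rstar ^ k) := by rw [mul_pow]; ring
      _ ≤ 12 ^ k * V rstar := by nlinarith
  -- final clauses
  have h12k1 : (1:ℝ) ≤ 12 ^ k := one_le_pow₀ (by norm_num : (1:ℝ) ≤ 12)
  have hrp1R : rstar + 1 ≤ Rstar := by nlinarith
  have h12ρ : 12 * rstar ≤ ρ := le_trans (le_of_lt hb) hRρ
  refine ⟨ha, hb, hc, hd, hrp1R, hd (rstar + 1) (by linarith) hrp1R, ?_, ?_⟩
  · exact hVmono (6 * (rstar + 1)) ⟨by linarith, by nlinarith⟩ (12 * rstar)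
      ⟨by linarith, h12ρ⟩ (by nlinarith)
  · calc V (12 * rstar) ≤ 12 ^ k * V rstar := hc
      _ ≤ 12 ^ k * V (rstar + 1) := by
          have := hVmono rstar hrIcc (rstar + 1) ⟨by linarith, by linarith⟩ (by linarith)
          nlinarith
end

section
/- Let k ≥ 1 be an integer, let ε, δ ∈ (0,1), and let M > 0 be a real number. Set W = 24·δ·M^{1/k} and L = 17W/(ε·δ^k). Let f: [0, L+2W] → [0, M] be a nondecreasing function such that for every r ∈ [W, L], if f(r+W) > f(r) then f(r+2W) − f(r−2W) ≥ (ε/(2·12^k))·W^k. Then there exists r ∈ [W, L] such that f(r+W) = f(r). -/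
set_option maxHeartbeats 1000000 in
/-- Abstract pigeonhole argument from Proposition 4.16 (decomposition of unfolded
into unfolded and round): with `W = 24·δ·M^(1/k)` and `L = 17W/(ε·δ^k)`, a
nondecreasing function `f : [0, L+2W] → [0, M]` such that whenever `f (r+W) > f r`
for `r ∈ [W, L]` the annulus carries volume `f (r+2W) - f (r-2W) ≥ (ε/(2·12^k))·W^k`,
must have some `r ∈ [W, L]` with `f (r+W) = f r`. -/
theorem empty_annulus_exists (k : ℕ) (hk : 1 ≤ k) (ε δ M : ℝ)
    (hε : ε ∈ Set.Ioo (0 : ℝ) 1) (hδ : δ ∈ Set.Ioo (0 : ℝ) 1) (hM : 0 < M)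
    (W L : ℝ) (hW : W = 24 * δ * M ^ ((1 : ℝ) / (k : ℝ)))
    (hL : L = 17 * W / (ε * δ ^ k))
    (f : ℝ → ℝ)
    (hf0 : ∀ x ∈ Set.Icc (0 : ℝ) (L + 2 * W), f x ∈ Set.Icc (0 : ℝ) M)
    (hfmono : ∀ x ∈ Set.Icc (0 : ℝ) (L + 2 * W), ∀ y ∈ Set.Icc (0 : ℝ) (L + 2 * W),
      x ≤ y → f x ≤ f y)
    (hann : ∀ r ∈ Set.Icc W L, f r < f (r + W) →
      ε / (2 * 12 ^ k) * W ^ k ≤ f (r + 2 * W) - f (r - 2 * W)) :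
    ∃ r ∈ Set.Icc W L, f (r + W) = f r := by
  by_contra hcon
  push_neg at hcon
  obtain ⟨hε0, hε1⟩ := hε
  obtain ⟨hδ0, hδ1⟩ := hδ
  have hk0 : (k : ℝ) ≠ 0 := Nat.cast_ne_zero.mpr (by omega)
  set x : ℝ := ε * δ ^ k with hxdef
  have hδk : 0 < δ ^ k := pow_pos hδ0 k
  have hx0 : 0 < x := mul_pos hε0 hδk
  have hx1 : x ≤ 1 := by
    have h1 : δ ^ k ≤ 1 := pow_le_one₀ hδ0.le hδ1.le
    nlinarith
  have h1x : 1 ≤ x⁻¹ := (one_le_inv₀ hx0).mpr hx1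
  have hμ : 0 < M ^ ((1 : ℝ) / (k : ℝ)) := Real.rpow_pos_of_pos hM _
  have hW0 : 0 < W := by rw [hW]; positivity
  have hμk : (M ^ ((1 : ℝ) / (k : ℝ))) ^ k = M := by
    rw [← Real.rpow_natCast (M ^ ((1 : ℝ) / (k : ℝ))) k, ← Real.rpow_mul hM.le]
    rw [one_div, inv_mul_cancel₀ hk0, Real.rpow_one]
  have hWk : W ^ k = 24 ^ k * (δ ^ k * M) := by
    rw [hW, mul_pow, mul_pow, hμk, mul_assoc]
  have h24 : (24 : ℝ) ^ k = 2 ^ k * 12 ^ k := by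
    rw [← mul_pow]; norm_num
  have h2k : (2 : ℝ) ≤ 2 ^ k := by
    calc (2 : ℝ) = 2 ^ 1 := (pow_one 2).symm
    _ ≤ 2 ^ k := pow_le_pow_right₀ one_le_two hk
  have h12 : ((12 : ℝ) ^ k) ≠ 0 := by positivity
  have hceq : ε / (2 * 12 ^ k) * W ^ k = x * M * (2 ^ k / 2) := by
    rw [hWk, h24, hxdef]
    field_simp
  have hc : x * M ≤ ε / (2 * 12 ^ k) * W ^ k := by
    rw [hceq]
    nlinarith [mul_pos hx0 hM]
  -- number of annuli
  set N : ℕ := ⌈x⁻¹⌉₊ + 1 with hN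
  have hNge : x⁻¹ + 1 ≤ (N : ℝ) := by
    have := Nat.le_ceil x⁻¹
    push_cast [hN]; linarith
  have hNle : (N : ℝ) ≤ x⁻¹ + 2 := by
    have := Nat.ceil_lt_add_one (le_of_lt (inv_pos.mpr hx0))
    push_cast [hN]; linarith
  have hL0 : 0 < L := by
    rw [hL]; positivity
  -- the annulus centers are in range
  have hrL : ∀ i : ℕ, i < N → 2 * W + 4 * W * i ≤ L := by
    intro i hi
    have hi' : (i : ℝ) ≤ x⁻¹ + 1 := by
      have h1 : i ≤ ⌈x⁻¹⌉₊ := by omega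
      have h2 : (i : ℝ) ≤ (⌈x⁻¹⌉₊ : ℝ) := Nat.cast_le.mpr h1
      have := Nat.ceil_lt_add_one (le_of_lt (inv_pos.mpr hx0))
      linarith
    rw [hL, div_eq_mul_inv]
    have hWx : W ≤ W * x⁻¹ := le_mul_of_one_le_right hW0.le h1x
    nlinarith [mul_le_mul_of_nonneg_left hi' (by positivity : (0:ℝ) ≤ 4 * W)]
  set g : ℕ → ℝ := fun i => f (4 * W * i) with hg
  have hdom : ∀ i : ℕ, i ≤ N → 4 * W * (i : ℝ) ∈ Set.Icc (0 : ℝ) (L + 2 * W) := by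
    intro i hi
    rw [Set.mem_Icc]
    constructor
    · positivity
    · rcases Nat.eq_zero_or_pos i with h0 | h0
      · subst h0; simp; nlinarith
      · have : 2 * W + 4 * W * ((i : ℝ) - 1) ≤ L := by
          have := hrL (i - 1) (by omega)
          have hcast : ((i - 1 : ℕ) : ℝ) = (i : ℝ) - 1 := by
            push_cast [Nat.cast_sub h0]; ring
          rwa [hcast] at this
        nlinarith
  have hsum : ∀ i ∈ Finset.range N, x * M ≤ g (i + 1) - g i := by
    intro i hi
    rw [Finset.mem_range] at hi
    obtain ⟨r, hr⟩ : ∃ r : ℝ, r = 2 * W + 4 * W * i := ⟨_, rfl⟩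
    have h4i : (0:ℝ) ≤ 4 * W * i :=
      mul_nonneg (mul_nonneg (by norm_num) hW0.le) (Nat.cast_nonneg i)
    have hr1 : W ≤ r := by rw [hr]; linarith
    have hr2 : r ≤ L := by rw [hr]; exact hrL i hi
    have hrmem : r ∈ Set.Icc W L := Set.mem_Icc.mpr ⟨hr1, hr2⟩
    have hrdom : r ∈ Set.Icc (0 : ℝ) (L + 2 * W) :=
      Set.mem_Icc.mpr ⟨by linarith, by linarith⟩
    have hrWdom : r + W ∈ Set.Icc (0 : ℝ) (L + 2 * W) :=
      Set.mem_Icc.mpr ⟨by linarith, by linarith⟩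
    have hle : f r ≤ f (r + W) := hfmono r hrdom (r + W) hrWdom (by linarith)
    have hne : f r ≠ f (r + W) := (hcon r hrmem).symm
    have hlt : f r < f (r + W) := hle.lt_of_ne hne
    have H := hann r hrmem hlt
    have e1 : r + 2 * W = 4 * W * ((i : ℝ) + 1) := by rw [hr]; ring
    have e2 : r - 2 * W = 4 * W * (i : ℝ) := by rw [hr]; ring
    rw [e1, e2] at H
    have : x * M ≤ f (4 * W * ((i : ℝ) + 1)) - f (4 * W * (i : ℝ)) := le_trans hc H
    simpa [hg, Nat.cast_add, Nat.cast_one] using this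
  have htel := Finset.sum_range_sub g N
  have hcard := Finset.card_nsmul_le_sum (Finset.range N) (fun i => g (i + 1) - g i) (x * M) hsum
  rw [htel, Finset.card_range, nsmul_eq_mul] at hcard
  have hgN : g N ≤ M := (Set.mem_Icc.mp (hf0 _ (hdom N le_rfl))).2
  have hg0 : 0 ≤ g 0 := by
    have := (Set.mem_Icc.mp (hf0 _ (hdom 0 (Nat.zero_le N)))).1
    simpa [hg] using this
  have hNM : (N : ℝ) * (x * M) ≤ M := by linarith
  have hNx : 1 < (N : ℝ) * x := by
    have : (x⁻¹ + 1) * x ≤ (N : ℝ) * x := mul_le_mul_of_nonneg_right hNge hx0.le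
    rw [add_mul, inv_mul_cancel₀ hx0.ne'] at this
    nlinarith
  nlinarith [mul_pos hx0 hM]
end
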